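/- With a₁ = 1 and a_k = (1/2)·√(√(9^{k+1} − 34·3^k + 25) − 3^k + 5) for k ≥ 2, one has a_j < 3^{-(k-j)/2}·a_k for all 1 ≤ j < k. Consequently: (i) a_{k₂} ≠ 2·a_{k₁} for all k₁ < k₂; (ii) a_{k₃} ≠ a_{k₂} + a_{k₁} for all k₁ < k₂ < k₃. -/
import Mathlib


/-- The limiting normalized frequencies at the Euler–Moulton relative equilibrium. -/
noncomputable def aseq (k : ℕ) : ℝ :=
  if k ≤ 1 then 1
  else (1 / 2) * Real.sqrt
    (Real.sqrt ((9 : ℝ) ^ (k + 1) - 34 * 3 ^ k + 25) - 3 ^ k + 5)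

lemma aseq_nonneg (k : ℕ) : 0 ≤ aseq k := by
  unfold aseq
  split
  · norm_num
  · positivity

lemma aseq_sq (k : ℕ) (hk : 2 ≤ k) :
    (2 * 3 ^ k - 1) / 4 ≤ aseq k ^ 2 ∧ aseq k ^ 2 ≤ (2 * 3 ^ k - 2/3) / 4 := by
  have hx : (9 : ℝ) ≤ 3 ^ k := by
    calc (9:ℝ) = 3 ^ 2 := by norm_num
    _ ≤ 3 ^ k := by exact pow_le_pow_right₀ (by norm_num) hk
  set x : ℝ := 3 ^ k with hxdef
  have hE : (9 : ℝ) ^ (k + 1) - 34 * 3 ^ k + 25 = 9 * x ^ 2 - 34 * x + 25 := by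
    have : (9:ℝ) ^ (k+1) = 9 * (3 ^ k) ^ 2 := by
      rw [show (9:ℝ) = 3^2 by norm_num, ← pow_mul, ← pow_mul, ← pow_add]
      congr 1
      omega
    rw [this]
  have hDnn : (0:ℝ) ≤ 9 * x ^ 2 - 34 * x + 25 := by nlinarith
  have hlow : 3 * x - 6 ≤ Real.sqrt (9 * x ^ 2 - 34 * x + 25) := by
    rw [show (9 * x ^ 2 - 34 * x + 25 : ℝ) = (3*x-6)^2 + (2*x - 11) by ring]
    calc 3*x - 6 = Real.sqrt ((3*x-6)^2) := by
          rw [Real.sqrt_sq (by nlinarith)]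
      _ ≤ _ := Real.sqrt_le_sqrt (by nlinarith)
  have hhigh : Real.sqrt (9 * x ^ 2 - 34 * x + 25) ≤ 3 * x - 17/3 := by
    calc Real.sqrt (9 * x ^ 2 - 34 * x + 25) ≤ Real.sqrt ((3*x - 17/3)^2) :=
          Real.sqrt_le_sqrt (by nlinarith)
      _ = 3*x - 17/3 := Real.sqrt_sq (by nlinarith)
  have hk1 : ¬ k ≤ 1 := by omega
  have haseq : aseq k = (1/2) * Real.sqrt (Real.sqrt (9 * x ^ 2 - 34 * x + 25) - x + 5) := by
    unfold aseq
    rw [if_neg hk1, hE]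
  have hinner : (0:ℝ) ≤ Real.sqrt (9 * x ^ 2 - 34 * x + 25) - x + 5 := by nlinarith
  have hsq : aseq k ^ 2 = (1/4) * (Real.sqrt (9 * x ^ 2 - 34 * x + 25) - x + 5) := by
    rw [haseq, mul_pow, Real.sq_sqrt hinner]
    ring
  constructor <;> rw [hsq] <;> nlinarith

lemma aseq_pos (k : ℕ) : 0 < aseq k := by
  rcases le_or_gt k 1 with h | h
  · unfold aseq; rw [if_pos h]; norm_num
  · have h2 : 2 ≤ k := h
    have := (aseq_sq k h2).1
    have hx : (9 : ℝ) ≤ 3 ^ k := by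
      calc (9:ℝ) = 3 ^ 2 := by norm_num
      _ ≤ 3 ^ k := by exact pow_le_pow_right₀ (by norm_num) h2
    have hne : aseq k ≠ 0 := by
      intro h0
      rw [h0] at this
      nlinarith
    exact lt_of_le_of_ne (aseq_nonneg k) (Ne.symm hne)

lemma aseq_step (k : ℕ) (hk : 1 ≤ k) : Real.sqrt 3 * aseq k < aseq (k + 1) := by
  have hs3 : Real.sqrt 3 ^ 2 = 3 := Real.sq_sqrt (by norm_num)
  have hs3nn : 0 ≤ Real.sqrt 3 := Real.sqrt_nonneg 3
  have hnext := aseq_sq (k+1) (by omega)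
  have h3 : (3:ℝ)^(k+1) = 3 * 3^k := by rw [pow_succ]; ring
  rcases eq_or_lt_of_le hk with h1 | h2
  · -- k = 1
    have hk1 : k = 1 := h1.symm
    subst hk1
    have ha1 : aseq 1 = 1 := by unfold aseq; norm_num
    have hsq : (Real.sqrt 3 * aseq 1) ^ 2 < aseq 2 ^ 2 := by
      rw [ha1, mul_one, hs3]
      have := hnext.1
      norm_num at this ⊢
      nlinarith
    exact lt_of_pow_lt_pow_left₀ 2 (aseq_nonneg 2) hsq
  · have h2' : 2 ≤ k := h2
    have hcur := aseq_sq k h2'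
    have hx : (9 : ℝ) ≤ 3 ^ k := by
      calc (9:ℝ) = 3 ^ 2 := by norm_num
      _ ≤ 3 ^ k := by exact pow_le_pow_right₀ (by norm_num) h2'
    have hsq : (Real.sqrt 3 * aseq k) ^ 2 < aseq (k+1) ^ 2 := by
      rw [mul_pow, hs3]
      have h1 := hcur.2
      have h2 := hnext.1
      rw [h3] at h2
      nlinarith
    exact lt_of_pow_lt_pow_left₀ 2 (aseq_nonneg (k+1)) hsq

lemma aseq_iter (j n : ℕ) (hj : 1 ≤ j) (hn : 1 ≤ n) :
    Real.sqrt 3 ^ n * aseq j < aseq (j + n) := by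
  induction n with
  | zero => omega
  | succ m ih =>
    rcases Nat.eq_or_lt_of_le hn with h1 | h2
    · simp only [← h1]
      simpa using aseq_step j hj
    · have hm : 1 ≤ m := by omega
      have := aseq_step (j + m) (by omega)
      have h3 : Real.sqrt 3 ^ (m+1) * aseq j = Real.sqrt 3 * (Real.sqrt 3 ^ m * aseq j) := by
        ring
      rw [h3, show j + (m+1) = (j + m) + 1 from rfl]
      calc Real.sqrt 3 * (Real.sqrt 3 ^ m * aseq j)
          < Real.sqrt 3 * aseq (j + m) := by
            apply mul_lt_mul_of_pos_left (ih hm)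
            exact Real.sqrt_pos.mpr (by norm_num)
        _ < aseq (j + m + 1) := this

-- appended after a.lean content
lemma sqrt3_gt : (3/2 : ℝ) < Real.sqrt 3 := by
  have h1 := Real.sq_sqrt (show (0:ℝ) ≤ 3 by norm_num)
  have h2 := Real.sqrt_nonneg 3
  nlinarith

lemma one_le_sqrt3 : (1:ℝ) ≤ Real.sqrt 3 := by linarith [sqrt3_gt]

lemma sqrt3_pow_ge_three {n : ℕ} (hn : 2 ≤ n) : (3:ℝ) ≤ Real.sqrt 3 ^ n := by
  have : Real.sqrt 3 ^ 2 ≤ Real.sqrt 3 ^ n := pow_le_pow_right₀ one_le_sqrt3 hn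
  rwa [Real.sq_sqrt (by norm_num : (0:ℝ) ≤ 3)] at this


/-- `a_j < 3^{-(k-j)/2} a_k` for `1 ≤ j < k`; consequently `a_{k₂} ≠ 2 a_{k₁}`
and `a_{k₃} ≠ a_{k₂} + a_{k₁}`. -/
theorem stmt15 :
    (∀ j k : ℕ, 1 ≤ j → j < k →
      aseq j < (3 : ℝ) ^ (-(((k : ℝ) - (j : ℝ)) / 2)) * aseq k) ∧
    (∀ k1 k2 : ℕ, 1 ≤ k1 → k1 < k2 → aseq k2 ≠ 2 * aseq k1) ∧
    (∀ k1 k2 k3 : ℕ, 1 ≤ k1 → k1 < k2 → k2 < k3 →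
      aseq k3 ≠ aseq k2 + aseq k1) := by
  have hspos : (0:ℝ) < Real.sqrt 3 := by linarith [sqrt3_gt]
  refine ⟨?_, ?_, ?_⟩
  · intro j k hj hjk
    obtain ⟨n, hn, rfl⟩ : ∃ n, 1 ≤ n ∧ k = j + n := ⟨k - j, by omega, by omega⟩
    have H := aseq_iter j n hj hn
    have hpow : (3 : ℝ) ^ (-((((j + n : ℕ) : ℝ) - (j : ℝ)) / 2)) = (Real.sqrt 3 ^ n)⁻¹ := by
      have h1 : (((j + n : ℕ) : ℝ) - (j : ℝ)) = (n : ℝ) := by push_cast; ring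
      rw [h1, Real.rpow_neg (by norm_num : (0:ℝ) ≤ 3)]
      congr 1
      rw [show ((n:ℝ)/2) = (1/2) * (n:ℝ) by ring,
        Real.rpow_mul (by norm_num : (0:ℝ) ≤ 3), Real.rpow_natCast,
        ← Real.sqrt_eq_rpow]
    rw [hpow, inv_mul_eq_div, lt_div_iff₀ (by positivity), mul_comm]
    exact H
  · intro k1 k2 hk1 hlt
    obtain ⟨n, hn, rfl⟩ : ∃ n, 1 ≤ n ∧ k2 = k1 + n := ⟨k2 - k1, by omega, by omega⟩
    have H := aseq_iter k1 n hk1 hn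
    have hpos := aseq_pos k1
    rcases Nat.lt_or_ge n 2 with h2 | h2
    · have hn1 : n = 1 := by omega
      subst hn1
      rcases Nat.eq_or_lt_of_le hk1 with h1 | h1
      · -- k1 = 1
        have hk1' : k1 = 1 := h1.symm
        subst hk1'
        have ha1 : aseq 1 = 1 := by unfold aseq; norm_num
        have h2sq := (aseq_sq 2 le_rfl).1
        have h2nn := aseq_nonneg 2
        intro heq
        rw [ha1, mul_one] at heq
        rw [show ((1:ℕ)+1) = 2 from rfl] at heq
        rw [heq] at h2sq
        norm_num at h2sq
      · -- k1 ≥ 2 : aseq (k1+1) < 2 * aseq k1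
        have hk2' : 2 ≤ k1 := h1
        have hx : (9 : ℝ) ≤ 3 ^ k1 := by
          calc (9:ℝ) = 3 ^ 2 := by norm_num
          _ ≤ 3 ^ k1 := pow_le_pow_right₀ (by norm_num) hk2'
        have hc := aseq_sq k1 hk2'
        have hn2 := aseq_sq (k1+1) (by omega)
        have h3 : (3:ℝ)^(k1+1) = 3 * 3^k1 := by rw [pow_succ]; ring
        rw [h3] at hn2
        have hlt2 : aseq (k1+1) < 2 * aseq k1 := by
          have hsq : aseq (k1+1)^2 < (2 * aseq k1)^2 := by nlinarith [hc.1, hn2.2]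
          exact lt_of_pow_lt_pow_left₀ 2 (by nlinarith [aseq_pos k1]) hsq
        exact ne_of_lt hlt2
    · have h3le := sqrt3_pow_ge_three h2
      have : 3 * aseq k1 < aseq (k1 + n) := by
        calc 3 * aseq k1 ≤ Real.sqrt 3 ^ n * aseq k1 := by nlinarith
          _ < aseq (k1 + n) := H
      intro heq
      rw [heq] at this
      linarith
  · intro k1 k2 k3 hk1 h12 h23
    have hp1 := aseq_pos k1
    have hp2 := aseq_pos k2
    obtain ⟨n2, hn2, rfl⟩ : ∃ n, 1 ≤ n ∧ k3 = k2 + n := ⟨k3 - k2, by omega, by omega⟩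
    have H2 := aseq_iter k2 n2 (by omega) hn2
    have H1 := aseq_iter k1 (k2 + n2 - k1) hk1 (by omega)
    rw [show k1 + (k2 + n2 - k1) = k2 + n2 by omega] at H1
    have hs2 : Real.sqrt 3 ≤ Real.sqrt 3 ^ n2 := by
      calc Real.sqrt 3 = Real.sqrt 3 ^ 1 := (pow_one _).symm
        _ ≤ _ := pow_le_pow_right₀ one_le_sqrt3 hn2
    have hA : (3/2) * aseq k2 < aseq (k2 + n2) := by
      calc (3/2) * aseq k2 ≤ Real.sqrt 3 ^ n2 * aseq k2 := by nlinarith [sqrt3_gt]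
        _ < _ := H2
    have h1 : 3 ≤ Real.sqrt 3 ^ (k2 + n2 - k1) := sqrt3_pow_ge_three (by omega)
    have hB : 3 * aseq k1 < aseq (k2 + n2) := by
      calc 3 * aseq k1 ≤ Real.sqrt 3 ^ (k2 + n2 - k1) * aseq k1 := by nlinarith
        _ < _ := H1
    intro heq
    linarith
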